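/- Let θ ∈ (0,1), λ ∈ (0,1], and let m ≥ 1 be a real number. Let g and ε be independent real random variables such that Ψ(g) + ε has the same distribution as g and E[|g|^m] < ∞. Then E[|g|^m]^{1/m} ≤ (1/(1−ρ)) · E[|ε|^m]^{1/m}, where ρ = 1 − λ·min(θ, 1−θ) ∈ (0,1). -/

import Mathlib

/-! Each of the two logarithms in `Ψ` is a mixture `log (1 - λ + λ eˣ)`, squeezed between `λ x`
(by convexity of `exp`) and `max x 0`. This makes `Ψ` a contraction towards `0` with factor
`ρ = 1 - λ min(θ, 1 - θ)`. By stationarity `‖g‖ₘ = ‖Ψ(g) + ε‖ₘ ≤ ρ ‖g‖ₘ + ‖ε‖ₘ` in `Lᵐ`, and since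
`‖g‖ₘ < ∞` this rearranges to `(1 - ρ) ‖g‖ₘ ≤ ‖ε‖ₘ`. -/

open Real MeasureTheory ProbabilityTheory
open scoped ENNReal

/-- One-block pre-arbitrage gap update map of the partially active AMM built on
a G3M with weights `(θ, 1-θ)`. -/
noncomputable def Psi (θ lam g : ℝ) : ℝ :=
  g - Real.log (1 - lam + lam * Real.exp (θ * g))
    + Real.log (1 - lam + lam * Real.exp (-(1 - θ) * g))

section MixtureLog

variable {lam : ℝ} (h0 : 0 < lam) (h1 : lam ≤ 1)
include h0 h1

lemma one_sub_add_mul_exp_pos (x : ℝ) : 0 < 1 - lam + lam * exp x := by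
  nlinarith [exp_pos x]

lemma mul_le_log_one_sub_add_mul_exp (x : ℝ) : lam * x ≤ log (1 - lam + lam * exp x) := by
  rw [le_log_iff_exp_le (one_sub_add_mul_exp_pos h0 h1 x)]
  have h := convexOn_exp.2 (Set.mem_univ x) (Set.mem_univ 0) h0.le
    (by linarith : (0:ℝ) ≤ 1 - lam) (by ring)
  simp only [smul_eq_mul, mul_zero, add_zero, exp_zero, mul_one] at h
  linarith

lemma log_one_sub_add_mul_exp_le {x : ℝ} (hx : 0 ≤ x) : log (1 - lam + lam * exp x) ≤ x := by
  rw [log_le_iff_le_exp (one_sub_add_mul_exp_pos h0 h1 x)]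
  nlinarith [one_le_exp hx]

lemma log_one_sub_add_mul_exp_nonpos {x : ℝ} (hx : x ≤ 0) : log (1 - lam + lam * exp x) ≤ 0 :=
  log_nonpos (one_sub_add_mul_exp_pos h0 h1 x).le (by nlinarith [exp_le_one_iff.mpr hx])

end MixtureLog

lemma abs_Psi_le {θ lam : ℝ} (hθ : θ ∈ Set.Ioo (0:ℝ) 1) (hlam : lam ∈ Set.Ioc (0:ℝ) 1) (g : ℝ) :
    |Psi θ lam g| ≤ (1 - lam * min θ (1 - θ)) * |g| := by
  obtain ⟨hθ0, hθ1⟩ := hθ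
  obtain ⟨hl0, hl1⟩ := hlam
  have hmin_left : lam * min θ (1 - θ) ≤ lam * θ := by gcongr; exact min_le_left _ _
  have hmin_right : lam * min θ (1 - θ) ≤ lam * (1 - θ) := by gcongr; exact min_le_right _ _
  have lb₁ := mul_le_log_one_sub_add_mul_exp hl0 hl1 (θ * g)
  have lb₂ := mul_le_log_one_sub_add_mul_exp hl0 hl1 (-(1 - θ) * g)
  unfold Psi
  rcases le_total 0 g with hg | hg
  · have ub₁ := log_one_sub_add_mul_exp_le hl0 hl1 (x := θ * g) (by positivity)
    have ub₂ := log_one_sub_add_mul_exp_nonpos hl0 hl1 (x := -(1 - θ) * g) (by nlinarith)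
    rw [abs_of_nonneg hg, abs_le]
    constructor <;> nlinarith
  · have ub₁ := log_one_sub_add_mul_exp_nonpos hl0 hl1 (x := θ * g) (by nlinarith)
    have ub₂ := log_one_sub_add_mul_exp_le hl0 hl1 (x := -(1 - θ) * g) (by nlinarith)
    rw [abs_of_nonpos hg, abs_le]
    constructor <;> nlinarith

lemma mul_min_one_sub_mem_Ioc {θ lam : ℝ} (hθ : θ ∈ Set.Ioo (0:ℝ) 1)
    (hlam : lam ∈ Set.Ioc (0:ℝ) 1) : lam * min θ (1 - θ) ∈ Set.Ioc (0:ℝ) 1 := by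
  obtain ⟨hθ0, hθ1⟩ := hθ
  obtain ⟨hl0, hl1⟩ := hlam
  have : min θ (1 - θ) ≤ θ := min_le_left _ _
  exact ⟨mul_pos hl0 (lt_min hθ0 (by linarith)), by nlinarith⟩

lemma measurable_Psi (θ lam : ℝ) : Measurable (Psi θ lam) := by
  unfold Psi
  fun_prop

lemma ENNReal.le_ofReal_one_div_one_sub_mul_of_le_mul_add {a b : ℝ≥0∞} {ρ : ℝ}
    (hρ0 : 0 ≤ ρ) (hρ1 : ρ < 1) (ha : a ≠ ∞) (h : a ≤ ENNReal.ofReal ρ * a + b) :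
    a ≤ ENNReal.ofReal (1 / (1 - ρ)) * b := by
  have hpos : ENNReal.ofReal (1 - ρ) ≠ 0 := (ENNReal.ofReal_pos.2 (by linarith)).ne'
  have hsplit : a = ENNReal.ofReal (1 - ρ) * a + ENNReal.ofReal ρ * a := by
    rw [← add_mul, ← ENNReal.ofReal_add (by linarith) hρ0, sub_add_cancel, ENNReal.ofReal_one,
      one_mul]
  have hgap : ENNReal.ofReal (1 - ρ) * a ≤ b := by
    have hfin : ENNReal.ofReal ρ * a ≠ ∞ := ENNReal.mul_ne_top ENNReal.ofReal_ne_top ha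
    rw [← ENNReal.add_le_add_iff_right hfin, ← hsplit, add_comm]
    exact h
  calc a = (ENNReal.ofReal (1 - ρ))⁻¹ * (ENNReal.ofReal (1 - ρ) * a) := by
        rw [← mul_assoc, ENNReal.inv_mul_cancel hpos ENNReal.ofReal_ne_top, one_mul]
    _ ≤ (ENNReal.ofReal (1 - ρ))⁻¹ * b := by gcongr
    _ = ENNReal.ofReal (1 / (1 - ρ)) * b := by
        rw [one_div, ENNReal.ofReal_inv_of_pos (by linarith)]

theorem stmt6_general {Ω : Type*} [MeasurableSpace Ω] (P : Measure Ω) [IsProbabilityMeasure P]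
    (θ lam m : ℝ) (hθ : θ ∈ Set.Ioo (0:ℝ) 1) (hlam : lam ∈ Set.Ioc (0:ℝ) 1)
    (hm : 1 ≤ m) (g ε : Ω → ℝ) (hεm : Measurable ε)
    (hstat : P.map (fun ω => Psi θ lam (g ω) + ε ω) = P.map g)
    (hmom : MemLp g (ENNReal.ofReal m) P) :
    eLpNorm g (ENNReal.ofReal m) P ≤
      ENNReal.ofReal (1 / (1 - (1 - lam * min θ (1 - θ)))) *
        eLpNorm ε (ENNReal.ofReal m) P := by
  set p := ENNReal.ofReal m
  have hρ := mul_min_one_sub_mem_Ioc hθ hlam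
  have hΨg : AEMeasurable (fun ω => Psi θ lam (g ω)) P :=
    (measurable_Psi θ lam).comp_aemeasurable hmom.1.aemeasurable
  have hstationary : eLpNorm (fun ω => Psi θ lam (g ω) + ε ω) p P = eLpNorm g p P :=
    IdentDistrib.eLpNorm_eq ⟨hΨg.add hεm.aemeasurable, hmom.1.aemeasurable, hstat⟩ p
  have hcontract : eLpNorm (fun ω => Psi θ lam (g ω)) p P
      ≤ ENNReal.ofReal (1 - lam * min θ (1 - θ)) * eLpNorm g p P :=
    eLpNorm_le_mul_eLpNorm_of_ae_le_mul (ae_of_all _ fun ω => abs_Psi_le hθ hlam (g ω)) p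
  refine ENNReal.le_ofReal_one_div_one_sub_mul_of_le_mul_add (by linarith [hρ.2])
    (by linarith [hρ.1]) hmom.eLpNorm_ne_top ?_
  calc eLpNorm g p P = eLpNorm (fun ω => Psi θ lam (g ω) + ε ω) p P := hstationary.symm
    _ ≤ eLpNorm (fun ω => Psi θ lam (g ω)) p P + eLpNorm ε p P :=
        eLpNorm_add_le hΨg.aestronglyMeasurable hεm.aestronglyMeasurable
          (ENNReal.one_le_ofReal.2 hm)
    _ ≤ _ := by gcongr

theorem stmt6 {Ω : Type*} [MeasurableSpace Ω] (P : Measure Ω) [IsProbabilityMeasure P]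
    (θ lam m : ℝ) (hθ : θ ∈ Set.Ioo (0:ℝ) 1) (hlam : lam ∈ Set.Ioc (0:ℝ) 1)
    (hm : 1 ≤ m) (g ε : Ω → ℝ) (hgm : Measurable g) (hεm : Measurable ε)
    (hindep : IndepFun g ε P)
    (hstat : P.map (fun ω => Psi θ lam (g ω) + ε ω) = P.map g)
    (hmom : MemLp g (ENNReal.ofReal m) P) :
    eLpNorm g (ENNReal.ofReal m) P ≤
      ENNReal.ofReal (1 / (1 - (1 - lam * min θ (1 - θ)))) *
        eLpNorm ε (ENNReal.ofReal m) P :=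
  stmt6_general P θ lam m hθ hlam hm g ε hεm hstat hmom
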